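/- arXiv:1308.1137 — 3 statements merged into one kernel-verified Lean document; each statement's English description precedes it below -/
import Mathlib

section
/- Let a : ℕ → ℂ be a sequence of complex numbers and C_k = A_{k−1} ⋯ A_1 A_0 the product of the first k Fibonacci matrices A_i = [[a_i, 1], [1, 0]]. Then for every k ≥ 2 the trace of C_k equals Ω_k(a; 0) + Ω_{k−2}(a; 1). -/
open scoped Classical

/-- A finite set of naturals can be partitioned into disjoint pairs of
consecutive integers `{m, m+1}`. -/
def ConsecPairable (S : Finset ℕ) : Prop :=
  ∃ P : Finset ℕ, (∀ m ∈ P, m + 1 ∉ P) ∧ S = P.biUnion (fun m => {m, m + 1})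

/-- `Omega a L n` is the sum, over all subsets `J` of `{L, …, L+n-1}` whose
complement can be partitioned into disjoint pairs of consecutive integers,
of the products `∏ j ∈ J, a j`. -/
noncomputable def Omega (a : ℕ → ℂ) (L n : ℕ) : ℂ :=
  ∑ J ∈ (Finset.Ico L (L + n)).powerset.filter
      (fun J => ConsecPairable (Finset.Ico L (L + n) \ J)),
    ∏ j ∈ J, a j

/-- The `i`-th Fibonacci matrix. -/
def fibMat (a : ℕ → ℂ) (i : ℕ) : Matrix (Fin 2) (Fin 2) ℂ :=
  !![a i, 1; 1, 0]

/-- The product `C n = A_{n-1} ⋯ A_1 A_0` of Fibonacci matrices. -/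
noncomputable def fibProd (a : ℕ → ℂ) : ℕ → Matrix (Fin 2) (Fin 2) ℂ
  | 0 => 1
  | n + 1 => fibMat a n * fibProd a n

/-!
Split the sum defining `Ω_{n+2}(a; L)` according to the top index `t = L + n + 1`: either
`t ∈ J`, contributing the factor `a_t` times a term of `Ω_{n+1}(a; L)`, or `t` lies in the
complement, where it can only be paired with `t - 1`, leaving a term of `Ω_n(a; L)`. So
`Ω_{n+2} = a_{L+n+1} Ω_{n+1} + Ω_n`, the recursion satisfied by the entries of `C_n`; by induction
`C_{n+2} = [[Ω_{n+2}(a; 0), Ω_{n+1}(a; 1)], [Ω_{n+1}(a; 0), Ω_n(a; 1)]]`, whose trace is the claim.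
-/

lemma consecPairable_empty : ConsecPairable ∅ := ⟨∅, by simp, by simp⟩

lemma ConsecPairable.exists_pred_mem {S : Finset ℕ} {u : ℕ} (h : ConsecPairable S)
    (hu : u ∈ S) (hu₁ : u + 1 ∉ S) : ∃ s ∈ S, s + 1 = u := by
  obtain ⟨P, -, rfl⟩ := h
  simp only [Finset.mem_biUnion, Finset.mem_insert, Finset.mem_singleton] at hu hu₁ ⊢
  obtain ⟨m, hm, hum | hum⟩ := hu
  · exact absurd ⟨m, hm, Or.inr (by rw [hum])⟩ hu₁
  · exact ⟨m, ⟨m, hm, Or.inl rfl⟩, hum.symm⟩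

lemma not_consecPairable_singleton (t : ℕ) : ¬ ConsecPairable {t} := fun h => by
  obtain ⟨s, hs, hst⟩ := h.exists_pred_mem (Finset.mem_singleton_self t) (by simp)
  rw [Finset.mem_singleton] at hs
  omega

lemma consecPairable_insert_insert_iff {S : Finset ℕ} {t : ℕ} (hS : ∀ x ∈ S, x < t) :
    ConsecPairable (insert (t + 1) (insert t S)) ↔ ConsecPairable S := by
  constructor
  · rintro ⟨P, hP, hPS⟩
    have mem : ∀ x, x = t + 1 ∨ x = t ∨ x ∈ S ↔ ∃ m ∈ P, x = m ∨ x = m + 1 := fun x => by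
      simpa using Finset.ext_iff.mp hPS x
    have hle : ∀ m ∈ P, m ≤ t := fun m hm => by
      have := (mem (m + 1)).mpr ⟨m, hm, Or.inr rfl⟩
      rcases this with h | h | h
      · omega
      · omega
      · exact (hS _ h).le.trans' (by omega)
    have htP : t ∈ P := by
      obtain ⟨m, hm, h⟩ := (mem (t + 1)).mp (Or.inl rfl)
      have := hle m hm
      obtain rfl : m = t := by omega
      exact hm
    refine ⟨P.erase t, fun m hm hm₁ => hP m (Finset.mem_of_mem_erase hm)
      (Finset.mem_of_mem_erase hm₁), ?_⟩
    ext x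
    simp only [Finset.mem_biUnion, Finset.mem_erase, Finset.mem_insert, Finset.mem_singleton]
    constructor
    · intro hx
      obtain ⟨m, hm, h⟩ := (mem x).mp (Or.inr (Or.inr hx))
      have := hS x hx
      exact ⟨m, ⟨by omega, hm⟩, h⟩
    · rintro ⟨m, ⟨hmt, hm⟩, h⟩
      have := hle m hm
      rcases (mem x).mpr ⟨m, hm, h⟩ with hx | hx | hx
      · omega
      · obtain rfl : x = m + 1 := by omega
        exact absurd (hx ▸ htP) (hP m hm)
      · exact hx
  · rintro ⟨P, hP, rfl⟩
    have hlt : ∀ m ∈ P, m + 1 < t := fun m hm => hS _ (Finset.mem_biUnion.mpr ⟨m, hm, by simp⟩)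
    refine ⟨insert t P, ?_, ?_⟩
    · intro m hm hm₁
      rw [Finset.mem_insert] at hm hm₁
      rcases hm with rfl | hm
      · rcases hm₁ with h | h
        · omega
        · have := hlt _ h; omega
      · have := hlt m hm
        rcases hm₁ with h | h
        · omega
        · exact hP m hm h
    · rw [Finset.biUnion_insert]
      ext x
      simp only [Finset.mem_insert, Finset.mem_union, Finset.mem_singleton]
      tauto

lemma not_consecPairable_insert_succ {S : Finset ℕ} {t : ℕ} (hS : ∀ x ∈ S, x < t) :
    ¬ ConsecPairable (insert (t + 1) S) := fun h => by
  obtain ⟨s, hs, hst⟩ := h.exists_pred_mem (Finset.mem_insert_self _ _) fun h' => by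
    rcases Finset.mem_insert.mp h' with h' | h'
    · omega
    · have := hS _ h'; omega
  rcases Finset.mem_insert.mp hs with hs | hs
  · omega
  · have := hS _ hs; omega

section omegaOn

variable {R : Type*} [CommSemiring R] (a : ℕ → R)

noncomputable def omegaOn (I : Finset ℕ) : R :=
  ∑ J ∈ I.powerset with ConsecPairable (I \ J), ∏ j ∈ J, a j

lemma omegaOn_eq_sum_powerset (I : Finset ℕ) :
    omegaOn a I = ∑ J ∈ I.powerset, if ConsecPairable (I \ J) then ∏ j ∈ J, a j else 0 :=
  Finset.sum_filter _ _

lemma omegaOn_empty : omegaOn a ∅ = 1 := by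
  simp [omegaOn_eq_sum_powerset, consecPairable_empty]

lemma omegaOn_singleton (t : ℕ) : omegaOn a {t} = a t := by
  rw [omegaOn_eq_sum_powerset, ← insert_empty_eq t,
    Finset.sum_powerset_insert (Finset.notMem_empty t)]
  simp [not_consecPairable_singleton, consecPairable_empty]

lemma omegaOn_insert_insert {I : Finset ℕ} {t : ℕ} (hI : ∀ x ∈ I, x < t) :
    omegaOn a (insert (t + 1) (insert t I)) = a (t + 1) * omegaOn a (insert t I) + omegaOn a I := by
  have ht : t ∉ I := fun h => (hI t h).false
  have ht₁ : t + 1 ∉ insert t I := by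
    rw [Finset.mem_insert, not_or]
    exact ⟨by omega, fun h => by have := hI _ h; omega⟩
  have ht₁' : ∀ J ⊆ I, t + 1 ∉ J := fun J hJ h => ht₁ (Finset.mem_insert_of_mem (hJ h))
  have h_keep : ∑ J ∈ I.powerset, (if ConsecPairable (insert (t + 1) (insert t I) \ J)
      then ∏ j ∈ J, a j else 0) = omegaOn a I := by
    rw [omegaOn_eq_sum_powerset]
    refine Finset.sum_congr rfl fun J hJ => ?_
    have hJ := Finset.mem_powerset.mp hJ
    rw [Finset.insert_sdiff_of_notMem _ (ht₁' J hJ),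
      Finset.insert_sdiff_of_notMem _ (fun h => ht (hJ h)),
      consecPairable_insert_insert_iff fun x hx => hI x (Finset.sdiff_subset hx)]
  have h_drop : ∑ J ∈ I.powerset, (if ConsecPairable (insert (t + 1) (insert t I) \ insert t J)
      then ∏ j ∈ insert t J, a j else 0) = 0 := by
    refine Finset.sum_eq_zero fun J hJ => if_neg ?_
    have hJ := Finset.mem_powerset.mp hJ
    rw [Finset.insert_sdiff_of_notMem _ (by simpa [eq_comm] using ht₁' J hJ),
      Finset.insert_sdiff_insert, Finset.sdiff_insert_of_notMem ht]
    exact not_consecPairable_insert_succ fun x hx => hI x (Finset.sdiff_subset hx)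
  have h_top : ∑ J ∈ (insert t I).powerset,
      (if ConsecPairable (insert (t + 1) (insert t I) \ insert (t + 1) J)
      then ∏ j ∈ insert (t + 1) J, a j else 0) = a (t + 1) * omegaOn a (insert t I) := by
    rw [omegaOn_eq_sum_powerset, Finset.mul_sum]
    refine Finset.sum_congr rfl fun J hJ => ?_
    rw [Finset.insert_sdiff_insert, Finset.sdiff_insert_of_notMem ht₁,
      Finset.prod_insert fun h => ht₁ (Finset.mem_powerset.mp hJ h), mul_ite, mul_zero]
  rw [omegaOn_eq_sum_powerset, Finset.sum_powerset_insert ht₁, Finset.sum_powerset_insert ht,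
    h_keep, h_drop, h_top, add_zero, add_comm]

end omegaOn

lemma omega_eq_omegaOn (a : ℕ → ℂ) (L n : ℕ) : Omega a L n = omegaOn a (Finset.Ico L (L + n)) :=
  rfl

lemma omega_zero (a : ℕ → ℂ) (L : ℕ) : Omega a L 0 = 1 := by
  rw [omega_eq_omegaOn, add_zero, Finset.Ico_self, omegaOn_empty]

lemma omega_one (a : ℕ → ℂ) (L : ℕ) : Omega a L 1 = a L := by
  rw [omega_eq_omegaOn, Nat.Ico_succ_singleton, omegaOn_singleton]

lemma omega_add_two (a : ℕ → ℂ) (L n : ℕ) :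
    Omega a L (n + 2) = a (L + n + 1) * Omega a L (n + 1) + Omega a L n := by
  have hIco : ∀ m, Finset.Ico L (L + (m + 1)) = insert (L + m) (Finset.Ico L (L + m)) :=
    fun m => Nat.Ico_succ_right_eq_insert_Ico (Nat.le_add_right L m)
  rw [omega_eq_omegaOn, omega_eq_omegaOn, omega_eq_omegaOn, hIco, hIco]
  exact omegaOn_insert_insert a (t := L + n) fun x hx => (Finset.mem_Ico.mp hx).2

lemma fibProd_add_two (a : ℕ → ℂ) (n : ℕ) :
    fibProd a (n + 2) =
      !![Omega a 0 (n + 2), Omega a 1 (n + 1); Omega a 0 (n + 1), Omega a 1 n] := by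
  induction n with
  | zero =>
    simp [fibProd, fibMat, omega_add_two, omega_one, omega_zero]
  | succ n ih =>
    rw [fibProd, ih, fibMat, Matrix.mul_fin_two, omega_add_two a 0 (n + 1), omega_add_two a 1 n]
    simp [add_comm, add_left_comm]

theorem trace_fibProd (a : ℕ → ℂ) (k : ℕ) (hk : 2 ≤ k) :
    (fibProd a k).trace = Omega a 0 k + Omega a 1 (k - 2) := by
  obtain ⟨n, rfl⟩ := Nat.exists_eq_add_of_le' hk
  rw [fibProd_add_two, Matrix.trace_fin_two_of, Nat.add_sub_cancel]
end

section
/- Let k ≥ 1, let a : ℕ → ℂ be a k-periodic sequence, let x : ℕ → ℂ satisfy x_{n+2} = a_n x_{n+1} + x_n for all n ≥ 0, and let C_k be the monodromy matrix. Suppose there exist complex numbers Φ⁻, Φ⁺ and an invertible 2×2 complex matrix J such that C_k = J · diag(Φ⁻, Φ⁺) · J⁻¹. Then for every n ≥ 0: x_{nk} = (Φ⁻)ⁿ · J_{2,1} ((J⁻¹)_{1,1} x_1 + (J⁻¹)_{1,2} x_0) + (Φ⁺)ⁿ · J_{2,2} ((J⁻¹)_{2,1} x_1 + (J⁻¹)_{2,2}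 x_0), and x_{nk+1} = (Φ⁻)ⁿ · J_{1,1} ((J⁻¹)_{1,1} x_1 + (J⁻¹)_{1,2} x_0) + (Φ⁺)ⁿ · J_{1,2} ((J⁻¹)_{2,1} x_1 + (J⁻¹)_{2,2} x_0). -/
lemma fibProd_add (a : ℕ → ℂ) (m : ℕ) :
    ∀ j, fibProd a (j + m) = fibProd (fun i => a (i + m)) j * fibProd a m
  | 0 => by simp [fibProd]
  | j + 1 => by
    rw [Nat.add_right_comm, fibProd, fibProd, fibProd_add a m j, Matrix.mul_assoc]
    rfl

lemma fibProd_mul_of_periodic {a : ℕ → ℂ} {k : ℕ} (ha : Function.Periodic a k) :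
    ∀ n, fibProd a (n * k) = fibProd a k ^ n
  | 0 => by simp [fibProd]
  | n + 1 => by
    have hshift : (fun i => a (i + n * k)) = a := funext (ha.nat_mul n)
    rw [Nat.succ_mul, Nat.add_comm, fibProd_add, hshift, fibProd_mul_of_periodic ha n, pow_succ']

lemma fibProd_mulVec {a x : ℕ → ℂ} (hx : ∀ n, x (n + 2) = a n * x (n + 1) + x n) :
    ∀ m, (fibProd a m).mulVec ![x 1, x 0] = ![x (m + 1), x m]
  | 0 => by simp [fibProd]
  | m + 1 => by
    rw [fibProd, ← Matrix.mulVec_mulVec, fibProd_mulVec hx m]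
    ext i
    fin_cases i <;> simp [fibMat, Matrix.mulVec, dotProduct, Fin.sum_univ_two, hx m]

lemma Matrix.conj_diagonal_fin_two_pow {R : Type*} [CommRing R] (J : Matrix (Fin 2) (Fin 2) R)
    (hJ : IsUnit J.det) (d₁ d₂ : R) (n : ℕ) :
    (J * !![d₁, 0; 0, d₂] * J⁻¹) ^ n = J * !![d₁ ^ n, 0; 0, d₂ ^ n] * J⁻¹ := by
  have hpow : Matrix.diagonal ![d₁, d₂] ^ n = Matrix.diagonal ![d₁ ^ n, d₂ ^ n] := by
    rw [Matrix.diagonal_pow]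
    congr 1
    ext i
    fin_cases i <;> rfl
  rw [← Matrix.diagonal_vec2, ← Matrix.diagonal_vec2, ← hpow]
  exact Units.conj_pow (Matrix.nonsingInvUnit J hJ) _ n

theorem binet_formula_diagonalizable_general (k : ℕ) (a : ℕ → ℂ)
    (ha : ∀ n, a (n + k) = a n) (x : ℕ → ℂ)
    (hx : ∀ n, x (n + 2) = a n * x (n + 1) + x n)
    (Φm Φp : ℂ) (J : Matrix (Fin 2) (Fin 2) ℂ) (hJ : IsUnit J.det)
    (hC : fibProd a k = J * !![Φm, 0; 0, Φp] * J⁻¹) (n : ℕ) :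
    x (n * k) =
      Φm ^ n * (J 1 0 * (J⁻¹ 0 0 * x 1 + J⁻¹ 0 1 * x 0)) +
      Φp ^ n * (J 1 1 * (J⁻¹ 1 0 * x 1 + J⁻¹ 1 1 * x 0)) ∧
    x (n * k + 1) =
      Φm ^ n * (J 0 0 * (J⁻¹ 0 0 * x 1 + J⁻¹ 0 1 * x 0)) +
      Φp ^ n * (J 0 1 * (J⁻¹ 1 0 * x 1 + J⁻¹ 1 1 * x 0)) := by
  have hv := fibProd_mulVec hx (n * k)
  rw [fibProd_mul_of_periodic ha, hC, Matrix.conj_diagonal_fin_two_pow J hJ] at hv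
  have h0 := congrFun hv 1
  have h1 := congrFun hv 0
  simp only [Matrix.mulVec, dotProduct, Matrix.mul_apply, Matrix.of_apply, Matrix.cons_val',
    Matrix.cons_val_fin_one, Fin.sum_univ_two, Matrix.cons_val_zero, Matrix.cons_val_one, mul_zero,
    add_zero, zero_add] at h0 h1
  constructor
  · rw [← h0]; ring
  · rw [← h1]; ring

theorem binet_formula_diagonalizable (k : ℕ) (hk : 1 ≤ k) (a : ℕ → ℂ)
    (ha : ∀ n, a (n + k) = a n) (x : ℕ → ℂ)
    (hx : ∀ n, x (n + 2) = a n * x (n + 1) + x n)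
    (Φm Φp : ℂ) (J : Matrix (Fin 2) (Fin 2) ℂ) (hJ : IsUnit J.det)
    (hC : fibProd a k = J * !![Φm, 0; 0, Φp] * J⁻¹) (n : ℕ) :
    x (n * k) =
      Φm ^ n * (J 1 0 * (J⁻¹ 0 0 * x 1 + J⁻¹ 0 1 * x 0)) +
      Φp ^ n * (J 1 1 * (J⁻¹ 1 0 * x 1 + J⁻¹ 1 1 * x 0)) ∧
    x (n * k + 1) =
      Φm ^ n * (J 0 0 * (J⁻¹ 0 0 * x 1 + J⁻¹ 0 1 * x 0)) +
      Φp ^ n * (J 0 1 * (J⁻¹ 1 0 * x 1 + J⁻¹ 1 1 * x 0)) :=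
  binet_formula_diagonalizable_general k a ha x hx Φm Φp J hJ hC n
end

section
/- Let a : ℕ → ℂ be a 3-periodic sequence (a_{n+3} = a_n for all n) satisfying a_0 + a_1 + a_2 + a_0 a_1 a_2 = 0. Then every solution x : ℕ → ℂ of x_{n+2} = a_n x_{n+1} + x_n is 6-periodic: x_{n+6} = x_n for all n ≥ 0. -/
/-!
Writing the recurrence as `(x (n+2), x (n+1)) = T n (x (n+1), x n)` with
`T n = !![a n, 1; 1, 0]`, the monodromy `M = T 2 * T 1 * T 0` over one period has trace
`a 0 + a 1 + a 2 + a 0 * a 1 * a 2 = 0` and determinant `(-1)^3 = -1`, so Cayley–Hamilton gives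
`M ^ 2 = 1`. Hence the state returns to its initial value after six steps, and since `a` is also
6-periodic the whole solution is 6-periodic.
-/

open Matrix

theorem Matrix.sq_fin_two_eq_trace_smul_sub_det_smul {R : Type*} [CommRing R]
    (M : Matrix (Fin 2) (Fin 2) R) : M ^ 2 = M.trace • M - M.det • 1 := by
  ext i j
  fin_cases i <;> fin_cases j <;>
    simp [sq, mul_apply, trace_fin_two, det_fin_two] <;> ring

theorem Matrix.sq_fin_two_eq_one {R : Type*} [CommRing R] {M : Matrix (Fin 2) (Fin 2) R}
    (htr : M.trace = 0) (hdet : M.det = -1) : M ^ 2 = 1 := by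
  simp [M.sq_fin_two_eq_trace_smul_sub_det_smul, htr, hdet]

namespace FibonacciRecurrence

variable {R : Type*} [CommRing R]

def transfer (a : ℕ → R) (n : ℕ) : Matrix (Fin 2) (Fin 2) R := !![a n, 1; 1, 0]

def transferProd (a : ℕ → R) (n : ℕ) : ℕ → Matrix (Fin 2) (Fin 2) R
  | 0 => 1
  | m + 1 => transfer a (n + m) * transferProd a n m

def state (x : ℕ → R) (n : ℕ) : Fin 2 → R := ![x (n + 1), x n]

variable {a x : ℕ → R}

theorem det_transfer (a : ℕ → R) (n : ℕ) : (transfer a n).det = -1 := by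
  simp [transfer, det_fin_two]

theorem det_transferProd (a : ℕ → R) (n m : ℕ) : (transferProd a n m).det = (-1) ^ m := by
  induction m with
  | zero => simp [transferProd]
  | succ m ih => rw [transferProd, det_mul, det_transfer, ih, pow_succ']

theorem transferProd_add (a : ℕ → R) (n m l : ℕ) :
    transferProd a n (m + l) = transferProd a (n + m) l * transferProd a n m := by
  induction l with
  | zero => simp [transferProd]
  | succ l ih => rw [← add_assoc, transferProd, transferProd, ih, add_assoc, Matrix.mul_assoc]

theorem transferProd_add_period {p : ℕ} (ha : Function.Periodic a p) (n m : ℕ) :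
    transferProd a (n + p) m = transferProd a n m := by
  induction m with
  | zero => rfl
  | succ m ih => rw [transferProd, transferProd, ih, transfer, transfer, add_right_comm, ha]

theorem transferProd_mul_period {p : ℕ} (ha : Function.Periodic a p) (k : ℕ) :
    transferProd a 0 (k * p) = transferProd a 0 p ^ k := by
  induction k with
  | zero => simp [transferProd]
  | succ k ih =>
    have hkp : Function.Periodic a (k * p) := by simpa using ha.nat_mul k
    rw [add_one_mul, transferProd_add, ih, pow_succ', zero_add, ← zero_add (k * p),
      transferProd_add_period hkp]

theorem trace_transferProd_three (a : ℕ → R) :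
    (transferProd a 0 3).trace = a 0 + a 1 + a 2 + a 0 * a 1 * a 2 := by
  simp [transferProd, transfer, trace_fin_two]
  ring

variable (hx : ∀ n, x (n + 2) = a n * x (n + 1) + x n)
include hx

theorem state_succ (n : ℕ) : state x (n + 1) = transfer a n *ᵥ state x n := by
  ext i
  fin_cases i <;> simp [state, transfer, hx, mul_comm]

theorem state_add (n m : ℕ) : state x (n + m) = transferProd a n m *ᵥ state x n := by
  induction m with
  | zero => simp [transferProd]
  | succ m ih => rw [← add_assoc, state_succ hx, ih, transferProd, mulVec_mulVec]

theorem periodic_of_state_eq {p : ℕ} (ha : Function.Periodic a p) (hp : state x p = state x 0) :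
    Function.Periodic x p := by
  have key : ∀ n, state x (n + p) = state x n := by
    intro n
    induction n with
    | zero => simpa using hp
    | succ n ih =>
      rw [add_right_comm, state_succ hx, ih, transfer, ha, ← transfer, ← state_succ hx]
  intro n
  simpa [state] using congr_fun (key n) 1

end FibonacciRecurrence

open FibonacciRecurrence

theorem three_periodic_zero_trace_six_periodic (a : ℕ → ℂ)
    (ha : ∀ n, a (n + 3) = a n)
    (hsum : a 0 + a 1 + a 2 + a 0 * a 1 * a 2 = 0)
    (x : ℕ → ℂ) (hx : ∀ n, x (n + 2) = a n * x (n + 1) + x n) :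
    ∀ n, x (n + 6) = x n := by
  have ha6 : Function.Periodic a 6 := by simpa using Function.Periodic.nat_mul ha 2
  have hM : transferProd a 0 3 ^ 2 = 1 :=
    Matrix.sq_fin_two_eq_one (by rw [trace_transferProd_three, hsum])
      (by rw [det_transferProd]; norm_num)
  refine periodic_of_state_eq hx ha6 ?_
  calc state x 6 = transferProd a 0 (2 * 3) *ᵥ state x 0 := state_add hx 0 6
    _ = state x 0 := by rw [transferProd_mul_period ha, hM, one_mulVec]
end
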